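/- Equivalence of walks on the hexagonal lattice (Theorem 3b): if σ_M(p) = (-1)^{d(p)+1} σ_R(p) for every site p, then the flipping mirror walk on σ_M and the flipping rotator walk on σ_R, both starting at the origin with velocity v_k for k odd (k ∈ {1,3,5}), have identical position sequences for all t ∈ ℕ. -/

import Mathlib

/-- The six unit velocities v_k = (cos(kπ/3), sin(kπ/3)), written in
coordinates with respect to the basis (1,0) and (1/2, √3/2) of the triangular
lattice containing the hexagonal lattice. -/
def hexVel (k : ZMod 6) : ℤ × ℤ :=
  if k = 0 then (1, 0) else if k = 1 then (0, 1) else if k = 2 then (-1, 1)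
  else if k = 3 then (-1, 0) else if k = 4 then (0, -1) else (1, -1)

/-- The mirror scattering rule M on ℍ² (Table 3). -/
def hexM (k : ZMod 6) (σ : ℤ) : ZMod 6 :=
  if σ = 1 then
    (if k = 0 then 5 else if k = 1 then 2 else if k = 2 then 1
     else if k = 3 then 4 else if k = 4 then 3 else 0)
  else
    (if k = 0 then 1 else if k = 1 then 0 else if k = 2 then 3
     else if k = 3 then 2 else if k = 4 then 5 else 4)

/-- The rotator scattering rule R on ℍ²: k ↦ (k - σ) mod 6. -/
def hexR (k : ZMod 6) (σ : ℤ) : ZMod 6 := k - (σ : ZMod 6)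

/-- State of a walk on ℍ²: position (in coordinates of the ambient triangular
lattice), velocity index, environment of scatterers. -/
structure HexState where
  pos : ℤ × ℤ
  vel : ZMod 6
  env : ℤ × ℤ → ℤ

/-- One step of the flipping dynamics with scattering rule `f`. -/
def hexStep (f : ZMod 6 → ℤ → ZMod 6) (s : HexState) : HexState :=
  let k' := f s.vel (s.env s.pos)
  { pos := s.pos + hexVel k', vel := k',
    env := fun q => if q = s.pos then -s.env s.pos else s.env q }

/-- The walk: state after `t` time steps. -/
def hexWalk (f : ZMod 6 → ℤ → ZMod 6) (s₀ : HexState) (t : ℕ) : HexState :=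
  (hexStep f)^[t] s₀

/-- The class of a triangular-lattice point: (x - y) mod 3.  The hexagonal
sublattice visited by a walker consists of two of the three classes. -/
def triClass (p : ℤ × ℤ) : ZMod 3 := ((p.1 - p.2 : ℤ) : ZMod 3)

lemma hexVel_ne_zero : ∀ k : ZMod 6, hexVel k ≠ 0 := by decide

/-- Adjacency of the hexagonal lattice visited by walks with odd-index initial
velocity: sites of class 0 are joined to their three neighbors in the
even-indexed directions (and symmetrically). -/
def hexAdjO (p q : ℤ × ℤ) : Prop :=
  (triClass p = 0 ∧ ∃ k : ZMod 6, Even k.val ∧ q = p + hexVel k) ∨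
  (triClass q = 0 ∧ ∃ k : ZMod 6, Even k.val ∧ p = q + hexVel k)

/-- The hexagonal lattice (for odd-index initial velocities) as a graph. -/
def hexGraphO : SimpleGraph (ℤ × ℤ) where
  Adj := hexAdjO
  symm := ⟨fun p q h => Or.symm h⟩
  loopless := ⟨by
    intro p h
    rcases h with ⟨-, k, -, hk⟩ | ⟨-, k, -, hk⟩ <;>
      exact hexVel_ne_zero k (left_eq_add.mp hk)⟩

/-- Graph distance to the origin in the hexagonal lattice (odd case). -/
noncomputable def hexDistO (p : ℤ × ℤ) : ℕ := hexGraphO.dist 0 p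

/-!
The hexagonal lattice is bipartite, with colour classes `triClass = 0` and `triClass = 1`, and a
walker started at the origin with odd velocity index always arrives at class-0 sites with an odd
index and at class-1 sites with an even one. Since the origin has class 0, the parity of `d(p) + 1`
at the walker's site is therefore the parity of its velocity index `k`. The mirror rule is the
rotator rule with the scatterer reversed exactly for odd `k`, i.e. `M(k, (-1)^k σ) = R(k, σ)`, so
the relation `σ_M = (-1)^(d+1) σ_R` makes both walks take the same step; as both flip the
scatterer they leave, the relation survives the step.
-/

open SimpleGraph

lemma triClass_add (p q : ℤ × ℤ) : triClass (p + q) = triClass p + triClass q := by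
  simp only [triClass, Prod.fst_add, Prod.snd_add]
  push_cast
  ring

lemma triClass_hexVel_of_even {k : ZMod 6} (hk : Even k.val) : triClass (hexVel k) = 1 := by
  revert hk; revert k; decide

lemma triClass_hexVel_of_odd {k : ZMod 6} (hk : Odd k.val) : triClass (hexVel k) = 2 := by
  revert hk; revert k; decide

lemma hexVel_add_three : ∀ k : ZMod 6, hexVel (k + 3) = -hexVel k := by decide

lemma even_val_add_three : ∀ {k : ZMod 6}, Odd k.val → Even (k + 3).val := by decide

lemma hexM_neg_one_pow_mul {σ : ℤ} (hσ : σ = 1 ∨ σ = -1) :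
    ∀ k : ZMod 6, hexM k ((-1) ^ k.val * σ) = hexR k σ := by
  rcases hσ with rfl | rfl <;> decide

lemma even_hexR_val_iff {σ : ℤ} (hσ : σ = 1 ∨ σ = -1) :
    ∀ k : ZMod 6, Even (hexR k σ).val ↔ Odd k.val := by
  rcases hσ with rfl | rfl <;> decide

lemma triClass_of_hexGraphO_adj {p q : ℤ × ℤ} (h : hexGraphO.Adj p q) :
    (triClass p = 0 ∧ triClass q = 1) ∨ (triClass q = 0 ∧ triClass p = 1) := by
  rcases h with ⟨hp, k, hk, rfl⟩ | ⟨hq, k, hk, rfl⟩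
  · exact Or.inl ⟨hp, by rw [triClass_add, hp, triClass_hexVel_of_even hk, zero_add]⟩
  · exact Or.inr ⟨hq, by rw [triClass_add, hq, triClass_hexVel_of_even hk, zero_add]⟩

def hexBicoloring : hexGraphO.Coloring Bool :=
  Coloring.mk (fun p => decide (triClass p = 0)) fun h => by
    rcases triClass_of_hexGraphO_adj h with ⟨hp, hq⟩ | ⟨hq, hp⟩ <;> simp [hp, hq]

lemma hexBicoloring_apply (p : ℤ × ℤ) : hexBicoloring p = decide (triClass p = 0) := rfl

lemma triClass_eq_zero_iff_of_adj {p q : ℤ × ℤ} (h : hexGraphO.Adj p q) :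
    triClass q = 0 ↔ ¬triClass p = 0 := by
  have := hexBicoloring.valid h
  simp only [hexBicoloring_apply, ne_eq, decide_eq_decide] at this
  tauto

lemma triClass_of_reachable {p : ℤ × ℤ} (hp : hexGraphO.Reachable 0 p) :
    triClass p = 0 ∨ triClass p = 1 := by
  obtain ⟨w⟩ := hp.symm
  cases w with
  | nil => exact Or.inl rfl
  | cons h _ => rcases triClass_of_hexGraphO_adj h with ⟨hp, -⟩ | ⟨-, hp⟩ <;> simp [hp]

lemma even_hexDistO_iff {p : ℤ × ℤ} (hp : hexGraphO.Reachable 0 p) :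
    Even (hexDistO p) ↔ triClass p = 0 := by
  obtain ⟨w, hw⟩ := hp.exists_walk_length_eq_dist
  rw [hexDistO, ← hw, hexBicoloring.even_length_iff_congr w]
  have h0 : triClass 0 = 0 := rfl
  simp [hexBicoloring_apply, h0]

lemma hexGraphO_adj_add_hexVel {p : ℤ × ℤ} {k : ZMod 6}
    (hp : triClass p = 0 ∨ triClass p = 1) (hk : triClass p = 0 ↔ Even k.val) :
    hexGraphO.Adj p (p + hexVel k) := by
  rcases hp with hp | hp
  · exact Or.inl ⟨hp, k, hk.mp hp, rfl⟩
  · have hodd : Odd k.val := Nat.not_even_iff_odd.mp fun he => by simp [hk.mpr he] at hp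
    refine Or.inr ⟨?_, k + 3, even_val_add_three hodd, ?_⟩
    · rw [triClass_add, hp, triClass_hexVel_of_odd hodd]; decide
    · rw [hexVel_add_three]; abel

structure IsCoupled (a b : HexState) : Prop where
  pos_eq : a.pos = b.pos
  vel_eq : a.vel = b.vel
  env_sign : ∀ q, b.env q = 1 ∨ b.env q = -1
  env_eq : ∀ q, triClass q = 0 ∨ triClass q = 1 → a.env q = (-1) ^ (hexDistO q + 1) * b.env q
  reachable : hexGraphO.Reachable 0 b.pos
  triClass_eq_zero_iff : triClass b.pos = 0 ↔ Odd b.vel.val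

namespace IsCoupled

variable {a b : HexState}

lemma hexM_eq_hexR (h : IsCoupled a b) :
    hexM a.vel (a.env a.pos) = hexR b.vel (b.env b.pos) := by
  have hp := triClass_of_reachable h.reachable
  have hsign : (-1 : ℤ) ^ (hexDistO b.pos + 1) = (-1) ^ b.vel.val := by
    refine neg_one_pow_congr ?_
    rw [Nat.even_add_one, even_hexDistO_iff h.reachable, h.triClass_eq_zero_iff,
      Nat.not_odd_iff_even]
  rw [h.pos_eq, h.vel_eq, h.env_eq _ hp, hsign, hexM_neg_one_pow_mul (h.env_sign _)]

lemma hexStep (h : IsCoupled a b) : IsCoupled (hexStep hexM a) (hexStep hexR b) := by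
  have hp := triClass_of_reachable h.reachable
  have hk : triClass b.pos = 0 ↔ Even (hexR b.vel (b.env b.pos)).val := by
    rw [even_hexR_val_iff (h.env_sign _)]
    exact h.triClass_eq_zero_iff
  have hadj := hexGraphO_adj_add_hexVel hp hk
  refine ⟨?_, h.hexM_eq_hexR, ?_, ?_, h.reachable.trans hadj.reachable, ?_⟩
  · simp only [_root_.hexStep]
    rw [h.hexM_eq_hexR, h.pos_eq]
  · intro q
    simp only [_root_.hexStep]
    split_ifs
    · rcases h.env_sign b.pos with hσ | hσ <;> simp [hσ]
    · exact h.env_sign q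
  · intro q hq
    simp only [_root_.hexStep, h.pos_eq]
    split_ifs with hqp
    · rw [hqp, h.env_eq _ hp]; ring
    · exact h.env_eq q hq
  · simp only [_root_.hexStep]
    rw [triClass_eq_zero_iff_of_adj hadj, hk, Nat.not_even_iff_odd]

lemma hexWalk (h : IsCoupled a b) (t : ℕ) :
    IsCoupled (hexWalk hexM a t) (hexWalk hexR b t) := by
  induction t with
  | zero => exact h
  | succ t ih =>
    simp only [_root_.hexWalk, Function.iterate_succ_apply'] at ih ⊢
    exact ih.hexStep

end IsCoupled

/-- Theorem 3b: if σ_M(p) = (-1)^{d(p)+1} σ_R(p) for every site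
p of the hexagonal lattice (d = graph distance to the origin), then the
flipping mirror walk on σ_M and the flipping rotator walk on σ_R, both starting
at the origin with a velocity of odd index, have identical positions at all
times. -/
theorem hex_equivalence_odd (σM σR : ℤ × ℤ → ℤ) (hσ : ∀ p, σR p = 1 ∨ σR p = -1)
    (hrel : ∀ p : ℤ × ℤ, triClass p = 0 ∨ triClass p = 1 →
      σM p = (-1) ^ (hexDistO p + 1) * σR p)
    (k₀ : ZMod 6) (hk : Odd k₀.val) (t : ℕ) :
    (hexWalk hexM ⟨0, k₀, σM⟩ t).pos = (hexWalk hexR ⟨0, k₀, σR⟩ t).pos := by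
  have hstart : IsCoupled ⟨0, k₀, σM⟩ ⟨0, k₀, σR⟩ :=
    ⟨rfl, rfl, hσ, hrel, Reachable.refl 0, iff_of_true rfl hk⟩
  exact (hstart.hexWalk t).pos_eq
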